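/- Let n ≥ 3 and let π ∈ S_n with π(n) = 1. Then π avoids both the pattern 213 and the pattern 312 and π² avoids the consecutive pattern 213 if and only if either π = 23⋯n1 (i.e., π(i) = i + 1 for 1 ≤ i ≤ n−1 and π(n) = 1), or π has the form σ n (n−1) τ 1, i.e., there is an index k with 1 ≤ k ≤ n−2 such that π(k) = n, π(k+1) = n−1, π(n) = 1, the values π(1), …, π(k−1) are increasing, and the values π(k+2), …, π(n−1) are decreasing. -/
import Mathlib


/-- `π` contains the (classical) pattern `σ`: there is a strictly increasing
sequence of positions on which `π` is order isomorphic to `σ`. -/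
def ContainsPat {n k : ℕ} (π : Equiv.Perm (Fin n)) (σ : Equiv.Perm (Fin k)) : Prop :=
  ∃ f : Fin k → Fin n, StrictMono f ∧ ∀ a b : Fin k, σ a < σ b ↔ π (f a) < π (f b)

/-- `π` avoids the pattern `σ`. -/
def AvoidsPat {n k : ℕ} (π : Equiv.Perm (Fin n)) (σ : Equiv.Perm (Fin k)) : Prop :=
  ¬ ContainsPat π σ

/-- `π` contains the consecutive pattern `σ`: some `k` consecutive positions of `π`
carry values order isomorphic to `σ`. -/
def ContainsConsecPat {n k : ℕ} (π : Equiv.Perm (Fin n)) (σ : Equiv.Perm (Fin k)) : Prop :=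
  ∃ (i : ℕ) (h : i + k ≤ n), ∀ a b : Fin k,
    σ a < σ b ↔ π ⟨i + a.val, by have := a.isLt; omega⟩ < π ⟨i + b.val, by have := b.isLt; omega⟩

/-- `π` avoids the consecutive pattern `σ`. -/
def AvoidsConsecPat {n k : ℕ} (π : Equiv.Perm (Fin n)) (σ : Equiv.Perm (Fin k)) : Prop :=
  ¬ ContainsConsecPat π σ

/-- the pattern 231 (0-indexed: 0 ↦ 1, 1 ↦ 2, 2 ↦ 0) -/
def p231 : Equiv.Perm (Fin 3) := c[0, 1, 2]

/-- the pattern 312 (0-indexed: 0 ↦ 2, 1 ↦ 0, 2 ↦ 1) -/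
def p312 : Equiv.Perm (Fin 3) := c[0, 2, 1]

/-- the pattern 213 (0-indexed: 0 ↦ 1, 1 ↦ 0, 2 ↦ 2) -/
def p213 : Equiv.Perm (Fin 3) := c[0, 1]

/-- the pattern 1432 (0-indexed: 0 ↦ 0, 1 ↦ 3, 2 ↦ 2, 3 ↦ 1) -/
def p1432 : Equiv.Perm (Fin 4) := c[1, 3]

/-- direct sum of two permutations -/
def dsum {k m : ℕ} (σ : Equiv.Perm (Fin k)) (τ : Equiv.Perm (Fin m)) :
    Equiv.Perm (Fin (k + m)) :=
  finSumFinEquiv.symm.trans ((Equiv.sumCongr σ τ).trans finSumFinEquiv)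

/-- the Lucas numbers: L₁ = 1, L₂ = 3, L_m = L_{m-1} + L_{m-2} -/
def lucas : ℕ → ℕ
  | 0 => 2
  | 1 => 1
  | n + 2 => lucas (n + 1) + lucas n

namespace Stmt11Aux

variable {n : ℕ}

def pv (π : Equiv.Perm (Fin n)) (i : ℕ) : ℕ :=
  if h : i < n then ((π ⟨i, h⟩ : Fin n) : ℕ) else 0

lemma pv_def (π : Equiv.Perm (Fin n)) {i : ℕ} (h : i < n) :
    pv π i = ((π ⟨i, h⟩ : Fin n) : ℕ) := dif_pos h

lemma pv_lt (π : Equiv.Perm (Fin n)) {i : ℕ} (h : i < n) : pv π i < n := by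
  rw [pv_def π h]; exact (π ⟨i, h⟩).isLt

lemma pv_inj (π : Equiv.Perm (Fin n)) {i j : ℕ} (hi : i < n) (hj : j < n)
    (h : pv π i = pv π j) : i = j := by
  rw [pv_def π hi, pv_def π hj] at h
  have h2 : π ⟨i, hi⟩ = π ⟨j, hj⟩ := Fin.val_injective h
  exact congrArg Fin.val (π.injective h2)

lemma pv_sq (π : Equiv.Perm (Fin n)) {i : ℕ} (h : i < n) :
    pv (π ^ 2) i = pv π (pv π i) := by
  have h1 : pv π i < n := pv_lt π h
  rw [pv_def (π ^ 2) h, pv_def π h1]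
  have e : (⟨pv π i, h1⟩ : Fin n) = π ⟨i, h⟩ := by
    apply Fin.ext; simp [pv_def π h]
  rw [e, pow_two, Equiv.Perm.mul_apply]

lemma pv_surj (π : Equiv.Perm (Fin n)) {v : ℕ} (hv : v < n) :
    ∃ j, j < n ∧ pv π j = v := by
  refine ⟨(π.symm ⟨v, hv⟩).val, (π.symm ⟨v, hv⟩).isLt, ?_⟩
  rw [pv_def π (π.symm ⟨v, hv⟩).isLt]
  simp

attribute [irreducible] pv

lemma consec_iff (π : Equiv.Perm (Fin n)) :
    ContainsConsecPat π p213 ↔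
      ∃ i, i + 3 ≤ n ∧ pv π (i+1) < pv π i ∧ pv π i < pv π (i+2) := by
  constructor
  · rintro ⟨i, h, hf⟩
    have e0 : pv π i = ((π ⟨i, by omega⟩ : Fin n) : ℕ) := pv_def π (by omega)
    have e1 : pv π (i+1) = ((π ⟨i+1, by omega⟩ : Fin n) : ℕ) := pv_def π (by omega)
    have e2 : pv π (i+2) = ((π ⟨i+2, by omega⟩ : Fin n) : ℕ) := pv_def π (by omega)
    refine ⟨i, h, ?_, ?_⟩
    · have h1 := (hf 1 0).1 (by decide)
      rw [e0, e1]; exact h1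
    · have h2 := (hf 0 2).1 (by decide)
      rw [e0, e2]; exact h2
  · rintro ⟨i, h3, h10, h02⟩
    refine ⟨i, h3, ?_⟩
    have e0 : pv π i = ((π ⟨i, by omega⟩ : Fin n) : ℕ) := pv_def π (by omega)
    have e1 : pv π (i+1) = ((π ⟨i+1, by omega⟩ : Fin n) : ℕ) := pv_def π (by omega)
    have e2 : pv π (i+2) = ((π ⟨i+2, by omega⟩ : Fin n) : ℕ) := pv_def π (by omega)
    rw [e0, e1] at h10
    rw [e0, e2] at h02
    have H10 : (π ⟨i+1, by omega⟩ : Fin n) < π ⟨i, by omega⟩ := h10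
    have H02 : (π ⟨i, by omega⟩ : Fin n) < π ⟨i+2, by omega⟩ := h02
    have fwd : ∀ a b : Fin 3, p213 a < p213 b →
        (π ⟨i + a.val, by have := a.isLt; omega⟩ : Fin n) <
          π ⟨i + b.val, by have := b.isLt; omega⟩ := by
      intro a b hs
      have hcase := (by decide :
        ∀ a b : Fin 3, p213 a < p213 b →
          (a = 1 ∧ b = 0) ∨ (a = 1 ∧ b = 2) ∨ (a = 0 ∧ b = 2)) a b hs
      rcases hcase with ⟨rfl, rfl⟩ | ⟨rfl, rfl⟩ | ⟨rfl, rfl⟩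
      · exact H10
      · exact lt_trans H10 H02
      · exact H02
    intro a b
    constructor
    · exact fwd a b
    · intro hp
      rcases lt_trichotomy (p213 a) (p213 b) with h | h | h
      · exact h
      · have hab : a = b := p213.injective h
        subst hab
        exact absurd hp (lt_irrefl _)
      · exact absurd hp (asymm (fwd b a h))

/-- positions a<b<c with a "valley" at b witness containment of 213 or 312 -/
lemma pat_iff (π : Equiv.Perm (Fin n)) :
    (AvoidsPat π p213 ∧ AvoidsPat π p312) ↔
      ∀ a b c : ℕ, a < b → b < c → c < n → pv π b < pv π a → pv π c < pv π b := by
  constructor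
  · rintro ⟨h213, h312⟩ a b c hab hbc hcn hba
    by_contra hcb
    have ha' : a < n := by omega
    have hb' : b < n := by omega
    have ea : pv π a = ((π ⟨a, ha'⟩ : Fin n) : ℕ) := pv_def π ha'
    have eb : pv π b = ((π ⟨b, hb'⟩ : Fin n) : ℕ) := pv_def π hb'
    have ec : pv π c = ((π ⟨c, hcn⟩ : Fin n) : ℕ) := pv_def π hcn
    have hbc' : pv π b < pv π c := by
      have : pv π b ≠ pv π c := fun h => by
        have := pv_inj π hb' hcn h; omega
      omega
    set f : Fin 3 → Fin n := fun x => if x.val = 0 then ⟨a, ha'⟩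
      else if x.val = 1 then ⟨b, hb'⟩ else ⟨c, hcn⟩ with hf
    have hmono : StrictMono f := by
      intro x y hxy
      have hcase := (by decide : ∀ x y : Fin 3, x < y →
        (x = 0 ∧ y = 1) ∨ (x = 0 ∧ y = 2) ∨ (x = 1 ∧ y = 2)) x y hxy
      rcases hcase with ⟨rfl, rfl⟩ | ⟨rfl, rfl⟩ | ⟨rfl, rfl⟩
      · exact (show (⟨a, ha'⟩ : Fin n) < ⟨b, hb'⟩ from Fin.mk_lt_mk.2 hab)
      · exact (show (⟨a, ha'⟩ : Fin n) < ⟨c, hcn⟩ from Fin.mk_lt_mk.2 (by omega))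
      · exact (show (⟨b, hb'⟩ : Fin n) < ⟨c, hcn⟩ from Fin.mk_lt_mk.2 hbc)
    have vba : π (f 1) < π (f 0) := by
      have h : ((π ⟨b, hb'⟩ : Fin n) : ℕ) < ((π ⟨a, ha'⟩ : Fin n) : ℕ) := by omega
      exact h
    have vbc : π (f 1) < π (f 2) := by
      have h : ((π ⟨b, hb'⟩ : Fin n) : ℕ) < ((π ⟨c, hcn⟩ : Fin n) : ℕ) := by omega
      exact h
    rcases lt_trichotomy (pv π a) (pv π c) with hac | hac | hac
    · -- 213 occurrence
      apply h213
      refine ⟨f, hmono, ?_⟩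
      have vac : π (f 0) < π (f 2) := by
        have h : ((π ⟨a, ha'⟩ : Fin n) : ℕ) < ((π ⟨c, hcn⟩ : Fin n) : ℕ) := by omega
        exact h
      have fwd : ∀ x y : Fin 3, p213 x < p213 y → π (f x) < π (f y) := by
        intro x y hs
        have hcase := (by decide :
          ∀ x y : Fin 3, p213 x < p213 y →
            (x = 1 ∧ y = 0) ∨ (x = 1 ∧ y = 2) ∨ (x = 0 ∧ y = 2)) x y hs
        rcases hcase with ⟨rfl, rfl⟩ | ⟨rfl, rfl⟩ | ⟨rfl, rfl⟩
        · exact vba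
        · exact vbc
        · exact vac
      intro x y
      refine ⟨fwd x y, fun hp => ?_⟩
      rcases lt_trichotomy (p213 x) (p213 y) with h | h | h
      · exact h
      · have : x = y := p213.injective h
        subst this; exact absurd hp (lt_irrefl _)
      · exact absurd hp (asymm (fwd y x h))
    · exact absurd (pv_inj π ha' hcn hac) (by omega)
    · -- 312 occurrence
      apply h312
      refine ⟨f, hmono, ?_⟩
      have vca : π (f 2) < π (f 0) := by
        have h : ((π ⟨c, hcn⟩ : Fin n) : ℕ) < ((π ⟨a, ha'⟩ : Fin n) : ℕ) := by omega
        exact h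
      have fwd : ∀ x y : Fin 3, p312 x < p312 y → π (f x) < π (f y) := by
        intro x y hs
        have hcase := (by decide :
          ∀ x y : Fin 3, p312 x < p312 y →
            (x = 1 ∧ y = 2) ∨ (x = 1 ∧ y = 0) ∨ (x = 2 ∧ y = 0)) x y hs
        rcases hcase with ⟨rfl, rfl⟩ | ⟨rfl, rfl⟩ | ⟨rfl, rfl⟩
        · exact vbc
        · exact vba
        · exact vca
      intro x y
      refine ⟨fwd x y, fun hp => ?_⟩
      rcases lt_trichotomy (p312 x) (p312 y) with h | h | h
      · exact h
      · have : x = y := p312.injective h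
        subst this; exact absurd hp (lt_irrefl _)
      · exact absurd hp (asymm (fwd y x h))
  · intro hval
    constructor
    · rintro ⟨f, hmono, hf⟩
      have h1 := (hf 1 0).1 (by decide)  -- π (f 1) < π (f 0)
      have h2 := (hf 0 2).1 (by decide)  -- π (f 0) < π (f 2)
      have hab : (f 0 : ℕ) < (f 1 : ℕ) := hmono (by decide)
      have hbc : (f 1 : ℕ) < (f 2 : ℕ) := hmono (by decide)
      have e0 : pv π (f 0).val = ((π (f 0) : Fin n) : ℕ) := by
        rw [pv_def π (f 0).isLt]
      have e1 : pv π (f 1).val = ((π (f 1) : Fin n) : ℕ) := by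
        rw [pv_def π (f 1).isLt]
      have e2 : pv π (f 2).val = ((π (f 2) : Fin n) : ℕ) := by
        rw [pv_def π (f 2).isLt]
      have := hval (f 0).val (f 1).val (f 2).val hab hbc (f 2).isLt
        (by rw [e0, e1]; exact h1)
      rw [e1, e2] at this
      have h2' : ((π (f 0) : Fin n) : ℕ) < ((π (f 2) : Fin n) : ℕ) := h2
      have h1' : ((π (f 1) : Fin n) : ℕ) < ((π (f 0) : Fin n) : ℕ) := h1
      omega
    · rintro ⟨f, hmono, hf⟩
      have h1 := (hf 1 2).1 (by decide)  -- π (f 1) < π (f 2)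
      have h2 := (hf 2 0).1 (by decide)  -- π (f 2) < π (f 0)
      have hab : (f 0 : ℕ) < (f 1 : ℕ) := hmono (by decide)
      have hbc : (f 1 : ℕ) < (f 2 : ℕ) := hmono (by decide)
      have e0 : pv π (f 0).val = ((π (f 0) : Fin n) : ℕ) := by
        rw [pv_def π (f 0).isLt]
      have e1 : pv π (f 1).val = ((π (f 1) : Fin n) : ℕ) := by
        rw [pv_def π (f 1).isLt]
      have e2 : pv π (f 2).val = ((π (f 2) : Fin n) : ℕ) := by
        rw [pv_def π (f 2).isLt]
      have h1' : ((π (f 1) : Fin n) : ℕ) < ((π (f 2) : Fin n) : ℕ) := h1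
      have h2' : ((π (f 2) : Fin n) : ℕ) < ((π (f 0) : Fin n) : ℕ) := h2
      have := hval (f 0).val (f 1).val (f 2).val hab hbc (f 2).isLt
        (by rw [e0, e1]; omega)
      rw [e1, e2] at this
      omega

lemma incr_gap (f : ℕ → ℕ) (b : ℕ) (hadj : ∀ i, i + 1 ≤ b → f i < f (i+1)) :
    ∀ i j, i ≤ j → j ≤ b → f i + (j - i) ≤ f j := by
  intro i j
  induction j with
  | zero =>
    intro h _
    have : i = 0 := Nat.le_zero.mp h
    subst this; omega
  | succ m ih =>
    intro hij hmb
    rcases Nat.eq_or_lt_of_le hij with h | h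
    · subst h; omega
    · have h1 := ih (by omega) (by omega)
      have h2 := hadj m (by omega)
      omega

lemma decr_gap (f : ℕ → ℕ) (a b : ℕ) (hadj : ∀ i, a ≤ i → i + 1 ≤ b → f (i+1) < f i) :
    ∀ i j, a ≤ i → i ≤ j → j ≤ b → f j + (j - i) ≤ f i := by
  intro i j
  induction j with
  | zero =>
    intro _ h _
    have : i = 0 := Nat.le_zero.mp h
    subst this; omega
  | succ m ih =>
    intro hai hij hmb
    rcases Nat.eq_or_lt_of_le hij with h | h
    · subst h; omega
    · have h1 := ih hai (by omega) (by omega)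
      have h2 := hadj m (by omega) (by omega)
      omega

lemma core (n : ℕ) (hn : 3 ≤ n) (π : Equiv.Perm (Fin n)) (hlast : pv π (n-1) = 0) :
    ((∀ a b c : ℕ, a < b → b < c → c < n → pv π b < pv π a → pv π c < pv π b) ∧
      ¬ ∃ i, i + 3 ≤ n ∧ pv (π^2) (i+1) < pv (π^2) i ∧ pv (π^2) i < pv (π^2) (i+2)) ↔
    ((∀ i, i < n - 1 → pv π i = i + 1) ∨
      ∃ k, k ≤ n - 3 ∧ pv π k = n - 1 ∧ pv π (k+1) = n - 2 ∧
        (∀ i j, i < j → j < k → pv π i < pv π j) ∧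
        (∀ i j, k + 2 ≤ i → i < j → j ≤ n - 2 → pv π j < pv π i)) := by
  constructor
  · rintro ⟨NV, HC⟩
    obtain ⟨k, hkn, hpk⟩ := pv_surj π (show n-1 < n by omega)
    have Inc : ∀ i j, i < j → j ≤ k → pv π i < pv π j := by
      intro i j hij hjk
      have hjn : j < n := by omega
      have hin : i < n := by omega
      rcases Nat.eq_or_lt_of_le hjk with rfl | hlt
      · have h1 : pv π i < n := pv_lt π hin
        have h2 : pv π i ≠ n-1 := fun h => by
          have := pv_inj π hin hkn (h.trans hpk.symm); omega
        omega
      · by_contra hle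
        have hne : pv π i ≠ pv π j := fun h => by
          have := pv_inj π hin hjn h; omega
        have hba : pv π j < pv π i := by omega
        have hres := NV i j k hij hlt hkn hba
        have h1 : pv π j < n := pv_lt π hjn
        omega
    have Dec : ∀ i j, k ≤ i → i < j → j < n → pv π j < pv π i := by
      intro i j hki hij hjn
      rcases Nat.eq_or_lt_of_le hki with rfl | hlt
      · have h1 : pv π j < n := pv_lt π hjn
        have h2 : pv π j ≠ n-1 := fun h => by
          have := pv_inj π hjn hkn (h.trans hpk.symm); omega
        omega
      · have hin : i < n := by omega
        have h1 : pv π i < n := pv_lt π hin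
        have h2 : pv π i ≠ n-1 := fun h => by
          have := pv_inj π hin hkn (h.trans hpk.symm); omega
        exact NV k i j hlt hij hjn (by omega)
    have hkne : k ≠ n-1 := by
      intro h
      rw [h, hlast] at hpk
      omega
    have IncAdj : ∀ i, i + 1 ≤ k → pv π i < pv π (i+1) :=
      fun i h => Inc i (i+1) (by omega) h
    have L : ∀ i, i ≤ k → i + 1 ≤ pv π i := by
      intro i hik
      have h0 : 1 ≤ pv π 0 := by
        have hne : pv π 0 ≠ 0 := fun h => by
          have := pv_inj π (by omega) (show n-1 < n by omega) (h.trans hlast.symm)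
          omega
        omega
      have := incr_gap (pv π) k IncAdj 0 i (by omega) hik
      omega
    by_cases hcase : k = n-2
    · subst hcase
      left
      intro i hi
      have hik : i ≤ n-2 := by omega
      have h1 := L i hik
      have h2 := incr_gap (pv π) (n-2) IncAdj i (n-2) hik (le_refl _)
      omega
    · right
      have hk3 : k ≤ n-3 := by omega
      have hpk1 : pv π (k+1) = n-2 := by
        by_contra hne
        obtain ⟨j, hjn, hj⟩ := pv_surj π (show n-2 < n by omega)
        have hjk : j ≠ k := fun h => by rw [h, hpk] at hj; omega
        have hjk1 : j ≠ k+1 := fun h => by rw [h] at hj; exact hne hj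
        have hjlt : j < k := by
          by_contra hge
          push_neg at hge
          have hj2 : k+2 ≤ j := by omega
          have d1 := Dec (k+1) j (by omega) (by omega) hjn
          have d2 := Dec k (k+1) (le_refl k) (by omega) (by omega)
          rw [hj] at d1
          rw [hpk] at d2
          omega
        have hj_eq : j = k-1 := by
          by_contra hlt2
          have hjlt2 : j < k-1 := by omega
          have i1 := Inc j (k-1) (by omega) (by omega)
          have i2 := Inc (k-1) k (by omega) (le_refl k)
          rw [hj] at i1
          rw [hpk] at i2
          have : pv π (k-1) < n := pv_lt π (by omega)
          omega
        have hk1 : 1 ≤ k := by omega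
        have hpkm : pv π (k-1) = n-2 := by rw [← hj_eq]; exact hj
        have hmn : pv π (k+1) < n := pv_lt π (by omega)
        have hm1 : pv π (k+1) ≠ n-1 := fun h => by
          have := pv_inj π (by omega) hkn (h.trans hpk.symm); omega
        have hm2 : pv π (k+1) ≠ 0 := fun h => by
          have := pv_inj π (by omega) (show n-1 < n by omega) (h.trans hlast.symm)
          omega
        have DecAdj : ∀ i, k ≤ i → i + 1 ≤ n-1 → pv π (i+1) < pv π i :=
          fun i h h2 => Dec i (i+1) h (by omega) (by omega)
        have pos : 0 < pv π (n-2) := by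
          have hne0 : pv π (n-2) ≠ 0 := fun h => by
            have := pv_inj π (show n-2 < n by omega) (show n-1 < n by omega)
              (h.trans hlast.symm)
            omega
          omega
        have key : pv π (n-2) < pv π (pv π (k+1)) := by
          rcases lt_trichotomy (pv π (k+1)) k with h | h | h
          · have l1 := L (pv π (k+1)) (by omega)
            have g := decr_gap (pv π) k (n-1) DecAdj (k+1) (n-2)
              (by omega) (by omega) (by omega)
            omega
          · rw [h, hpk]
            have h1 : pv π (n-2) < n := pv_lt π (by omega)
            have h2 : pv π (n-2) ≠ n-1 := fun hx => by
              have := pv_inj π (show n-2 < n by omega) hkn (hx.trans hpk.symm)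
              omega
            omega
          · exact Dec (pv π (k+1)) (n-2) (by omega) (by omega) (by omega)
        apply HC
        refine ⟨k-1, by omega, ?_, ?_⟩
        · have e1 : pv (π^2) (k-1+1) = pv π (pv π k) := by
            rw [show k-1+1 = k by omega, pv_sq π (show k < n by omega)]
          have e0 : pv (π^2) (k-1) = pv π (pv π (k-1)) := pv_sq π (by omega)
          rw [e1, e0, hpk, hpkm, hlast]
          exact pos
        · have e0 : pv (π^2) (k-1) = pv π (pv π (k-1)) := pv_sq π (by omega)
          have e2 : pv (π^2) (k-1+2) = pv π (pv π (k+1)) := by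
            rw [show k-1+2 = k+1 by omega, pv_sq π (show k+1 < n by omega)]
          rw [e0, e2, hpkm]
          exact key
      refine ⟨k, hk3, hpk, hpk1, ?_, ?_⟩
      · intro i j hij hjk
        exact Inc i j hij (by omega)
      · intro i j h2i hij hj2
        exact Dec i j (by omega) hij (by omega)
  · rintro (HL | ⟨k, hk3, hpk, hpk1, HI, HD⟩)
    · constructor
      · intro a b c hab hbc hcn hba
        have ha : pv π a = a+1 := HL a (by omega)
        have hb : pv π b = b+1 := HL b (by omega)
        omega
      · rintro ⟨i, h3, hA, hB⟩
        rw [pv_sq π (show i < n by omega), pv_sq π (show i+1 < n by omega)] at hA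
        rw [pv_sq π (show i < n by omega), pv_sq π (show i+2 < n by omega)] at hB
        have v0 : pv π i = i+1 := HL i (by omega)
        have v1 : pv π (i+1) = i+2 := HL (i+1) (by omega)
        rw [v0, v1] at hA hB
        by_cases h2 : i+2 = n-1
        · have v2 : pv π (i+2) = 0 := by rw [h2]; exact hlast
          have w1 : pv π (i+2) < pv π (i+2) → False := by omega
          rw [v2] at hB
          have p0 : pv π 0 = 1 := HL 0 (by omega)
          rw [p0] at hB
          omega
        · have v2 : pv π (i+2) = i+3 := HL (i+2) (by omega)
          rw [v2] at hA
          omega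
    · have hkn : k < n := by omega
      have Inc : ∀ i j, i < j → j ≤ k → pv π i < pv π j := by
        intro i j hij hjk
        rcases Nat.eq_or_lt_of_le hjk with rfl | h
        · have h1 : pv π i < n := pv_lt π (by omega)
          have h2 : pv π i ≠ n-1 := fun h => by
            have := pv_inj π (by omega) hkn (h.trans hpk.symm); omega
          omega
        · exact HI i j hij h
      have IncAdj : ∀ i, i + 1 ≤ k → pv π i < pv π (i+1) :=
        fun i h => Inc i (i+1) (by omega) h
      have L : ∀ i, i ≤ k → i + 1 ≤ pv π i := by
        intro i hik
        have h0 : 1 ≤ pv π 0 := by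
          have hne : pv π 0 ≠ 0 := fun h => by
            have := pv_inj π (by omega) (show n-1 < n by omega) (h.trans hlast.symm)
            omega
          omega
        have := incr_gap (pv π) k IncAdj 0 i (by omega) hik
        omega
      have DecAdj : ∀ i, k ≤ i → i + 1 ≤ n-1 → pv π (i+1) < pv π i := by
        intro i hki hi1
        rcases Nat.eq_or_lt_of_le hki with rfl | h
        · rw [hpk1, hpk]; omega
        · by_cases hik1 : i = k+1
          · subst hik1
            by_cases h2 : k+2 = n-1
            · rw [show k+1+1 = n-1 by omega, hlast, hpk1]
              omega
            · have b1 : pv π (k+1+1) < n := pv_lt π (by omega)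
              have ne1 : pv π (k+1+1) ≠ n-1 := fun h => by
                have := pv_inj π (by omega) hkn (h.trans hpk.symm); omega
              have ne2 : pv π (k+1+1) ≠ n-2 := fun h => by
                have := pv_inj π (by omega) (show k+1 < n by omega)
                  (h.trans hpk1.symm)
                omega
              rw [hpk1]
              omega
          · by_cases h2 : i+1 = n-1
            · rw [h2, hlast]
              have hne : pv π i ≠ 0 := fun h => by
                have := pv_inj π (by omega) (show n-1 < n by omega)
                  (h.trans hlast.symm)
                omega
              omega
            · exact HD i (i+1) (by omega) (by omega) (by omega)
      have Dec : ∀ i j, k ≤ i → i < j → j ≤ n-1 → pv π j < pv π i := by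
        intro i j h1 h2 h3
        have := decr_gap (pv π) k (n-1) DecAdj i j h1 (by omega) h3
        omega
      constructor
      · intro a b c hab hbc hcn hba
        rcases le_or_gt b k with h | h
        · have := Inc a b hab h; omega
        · exact Dec b c (by omega) hbc (by omega)
      · rintro ⟨i, h3, hA, hB⟩
        rw [pv_sq π (show i < n by omega), pv_sq π (show i+1 < n by omega)] at hA
        rw [pv_sq π (show i < n by omega), pv_sq π (show i+2 < n by omega)] at hB
        by_cases hc1 : k ≤ i
        · have h01 : pv π (i+1) < pv π i := Dec i (i+1) hc1 (by omega) (by omega)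
          have h12 : pv π (i+2) < pv π (i+1) := Dec (i+1) (i+2) (by omega) (by omega) (by omega)
          rcases le_or_gt k (pv π (i+1)) with h' | h'
          · have hub : pv π i < n := pv_lt π (by omega)
            have := Dec (pv π (i+1)) (pv π i) h' h01 (by omega)
            omega
          · have := Inc (pv π (i+2)) (pv π (i+1)) h12 (by omega)
            omega
        · by_cases hc2 : i+2 ≤ k
          · have h01 : pv π i < pv π (i+1) := Inc i (i+1) (by omega) (by omega)
            have h12 : pv π (i+1) < pv π (i+2) := Inc (i+1) (i+2) (by omega) (by omega)
            rcases le_or_gt (pv π (i+1)) k with h' | h'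
            · have := Inc (pv π i) (pv π (i+1)) h01 h'
              omega
            · have hub : pv π (i+2) < n := pv_lt π (by omega)
              have := Dec (pv π (i+1)) (pv π (i+2)) (by omega) h12 (by omega)
              omega
          · have hek : k = i+1 := by omega
            subst hek
            rw [hpk, hlast] at hA
            rw [show i+1+1 = i+2 by omega] at hpk1
            rw [hpk1] at hB
            have hu1 : i + 1 ≤ pv π i := L i (by omega)
            have hun : pv π i < n := pv_lt π (by omega)
            have hu2 : pv π i ≠ n-1 := fun h => by
              have := pv_inj π (by omega) hkn (h.trans hpk.symm); omega
            have hu3 : pv π i ≠ n-2 := fun h => by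
              have := pv_inj π (by omega) (show i+1+1 < n by omega)
                (h.trans hpk1.symm)
              omega
            rcases Nat.eq_or_lt_of_le hu1 with h | h
            · rw [← h, hpk] at hB
              have h1 : pv π (n-2) < n := pv_lt π (by omega)
              have h2 : pv π (n-2) ≠ n-1 := fun hx => by
                have := pv_inj π (show n-2 < n by omega) hkn (hx.trans hpk.symm)
                omega
              omega
            · have := Dec (pv π i) (n-2) (by omega) (by omega) (by omega)
              omega

end Stmt11Aux

/-- for n ≥ 3 and π ∈ S_n with π(n) = 1, π avoids 213 and 312 and π²
avoids the consecutive pattern 213, iff π = 23⋯n1 or π = σ n (n−1) τ 1 with σ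
increasing and τ decreasing (the existential k is the 0-indexed position of the
value n; 1-based 1 ≤ k ≤ n−2 becomes 0 ≤ k ≤ n−3). -/
theorem stmt11 (n : ℕ) (hn : 3 ≤ n) (π : Equiv.Perm (Fin n))
    (hlast : π ⟨n - 1, by omega⟩ = ⟨0, by omega⟩) :
    (AvoidsPat π p213 ∧ AvoidsPat π p312 ∧ AvoidsConsecPat (π ^ 2) p213) ↔
      ((∀ i : Fin n, (i : ℕ) < n - 1 → (π i : ℕ) = (i : ℕ) + 1) ∨
        ∃ (k : ℕ) (hk : k ≤ n - 3),
          (π ⟨k, by omega⟩ : ℕ) = n - 1 ∧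
          (π ⟨k + 1, by omega⟩ : ℕ) = n - 2 ∧
          (∀ i j : Fin n, (i : ℕ) < (j : ℕ) → (j : ℕ) < k → π i < π j) ∧
          (∀ i j : Fin n, k + 2 ≤ (i : ℕ) → (i : ℕ) < (j : ℕ) → (j : ℕ) ≤ n - 2 →
            π j < π i)) := by
  have hlast' : Stmt11Aux.pv π (n-1) = 0 := by
    rw [Stmt11Aux.pv_def π (show n-1 < n by omega), hlast]
  have key := Stmt11Aux.core n hn π hlast'
  constructor
  · rintro ⟨h1, h2, h3⟩
    have NV := (Stmt11Aux.pat_iff π).1 ⟨h1, h2⟩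
    have HC : ¬ ∃ i, i + 3 ≤ n ∧ Stmt11Aux.pv (π^2) (i+1) < Stmt11Aux.pv (π^2) i ∧
        Stmt11Aux.pv (π^2) i < Stmt11Aux.pv (π^2) (i+2) :=
      fun h => h3 ((Stmt11Aux.consec_iff (π^2)).2 h)
    rcases key.1 ⟨NV, HC⟩ with HL | ⟨k, hk3, e1, e2, HI, HD⟩
    · left
      intro i hi
      have := HL i.val hi
      rw [Stmt11Aux.pv_def π i.isLt] at this
      simpa using this
    · right
      refine ⟨k, hk3, ?_, ?_, ?_, ?_⟩
      · rw [← Stmt11Aux.pv_def π (show k < n by omega)]; exact e1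
      · rw [← Stmt11Aux.pv_def π (show k+1 < n by omega)]; exact e2
      · intro i j hij hjk
        have := HI i.val j.val hij hjk
        rw [Stmt11Aux.pv_def π i.isLt, Stmt11Aux.pv_def π j.isLt] at this
        exact this
      · intro i j hi hij hj
        have := HD i.val j.val hi hij hj
        rw [Stmt11Aux.pv_def π j.isLt, Stmt11Aux.pv_def π i.isLt] at this
        exact this
  · intro h
    have hr : ((∀ i, i < n - 1 → Stmt11Aux.pv π i = i + 1) ∨
        ∃ k, k ≤ n - 3 ∧ Stmt11Aux.pv π k = n - 1 ∧ Stmt11Aux.pv π (k+1) = n - 2 ∧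
          (∀ i j, i < j → j < k → Stmt11Aux.pv π i < Stmt11Aux.pv π j) ∧
          (∀ i j, k + 2 ≤ i → i < j → j ≤ n - 2 →
            Stmt11Aux.pv π j < Stmt11Aux.pv π i)) := by
      rcases h with HL | ⟨k, hk3, e1, e2, HI, HD⟩
      · left
        intro i hi
        have := HL ⟨i, by omega⟩ hi
        rw [Stmt11Aux.pv_def π (show i < n by omega)]
        exact this
      · right
        refine ⟨k, hk3, ?_, ?_, ?_, ?_⟩
        · rw [Stmt11Aux.pv_def π (show k < n by omega)]; exact e1
        · rw [Stmt11Aux.pv_def π (show k+1 < n by omega)]; exact e2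
        · intro i j hij hjk
          have hin : i < n := by omega
          have hjn : j < n := by omega
          have hv : ((π ⟨i, hin⟩ : Fin n) : ℕ) < ((π ⟨j, hjn⟩ : Fin n) : ℕ) :=
            HI ⟨i, hin⟩ ⟨j, hjn⟩ hij hjk
          simp only [Stmt11Aux.pv_def π hin, Stmt11Aux.pv_def π hjn]
          exact hv
        · intro i j hi hij hj
          have hin : i < n := by omega
          have hjn : j < n := by omega
          have hv : ((π ⟨j, hjn⟩ : Fin n) : ℕ) < ((π ⟨i, hin⟩ : Fin n) : ℕ) :=
            HD ⟨i, hin⟩ ⟨j, hjn⟩ hi hij hj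
          simp only [Stmt11Aux.pv_def π hin, Stmt11Aux.pv_def π hjn]
          exact hv
    obtain ⟨NV, HC⟩ := key.2 hr
    obtain ⟨h1, h2⟩ := (Stmt11Aux.pat_iff π).2 NV
    exact ⟨h1, h2, fun hc => HC ((Stmt11Aux.consec_iff (π^2)).1 hc)⟩
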